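/- Let σ₁, σ₂ ⊆ ℂ be nonempty compact sets with Re(x) < 0 on σ₁ and Re(x) > 0 on σ₂, σ = σ₁ ∪ σ₂. Suppose g : σ₁ → ℂ is a uniform-plus-variation limit on σ₁ of polynomials in two real variables, and define ĝ : σ → ℂ by ĝ = g on σ₁ and ĝ = 0 on σ₂. Then for each ε > 0 there exists a function of the form χ·p on σ (where p is a polynomial in two real variables and χ is the indicator function of the closed left half-plane {Re z ≤ 0} restricted to σ) with ‖ĝ − χ·p‖_{BV(σ)} < ε, where ‖h‖_{BV(σ)} = ‖h‖_∞ + var(h, σ). -/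

import Mathlib

open MvPolynomial
open scoped ENNReal NNReal Classical
open scoped ENNReal NNReal Classical

/-- Cross product of two planar vectors (identified with complex numbers). -/
def crossC (v w : ℂ) : ℝ := v.re * w.im - v.im * w.re

/-- Signed side of the point `x` relative to the line through `u` with direction `v`. -/
def sideC (u v x : ℂ) : ℝ := crossC v (x - u)

/-- The segment `[x i, x (i+1)]` is a crossing segment of the list `x` on the line
through `u` with direction `v`. -/
def CrossSeg {n : ℕ} (u v : ℂ) (x : Fin (n+1) → ℂ) (i : Fin n) : Prop :=
  (sideC u v (x i.castSucc) * sideC u v (x i.succ) < 0) ∨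
  ((i : ℕ) = 0 ∧ sideC u v (x i.castSucc) = 0) ∨
  (sideC u v (x i.castSucc) ≠ 0 ∧ sideC u v (x i.succ) = 0)

/-- Number of crossing segments of a list on a given line. -/
noncomputable def vfLine {n : ℕ} (u v : ℂ) (x : Fin (n+1) → ℂ) : ℕ :=
  Nat.card {i : Fin n // CrossSeg u v x i}

/-- Variation factor of a list: the maximum of `vfLine` over all lines. -/
noncomputable def vf {n : ℕ} (x : Fin (n+1) → ℂ) : ℕ :=
  sSup {m : ℕ | ∃ u v : ℂ, v ≠ 0 ∧ m = vfLine u v x}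

/-- Curve variation of `f` along a list of points. -/
noncomputable def cvar {n : ℕ} (f : ℂ → ℂ) (x : Fin (n+1) → ℂ) : ℝ :=
  ∑ i : Fin n, ‖f (x i.succ) - f (x i.castSucc)‖

/-- Two-dimensional variation of `f` on `σ`. -/
noncomputable def twoVar (f : ℂ → ℂ) (σ : Set ℂ) : ℝ≥0∞ :=
  ⨆ (n : ℕ) (x : Fin (n+1) → ℂ) (_ : ∀ i, x i ∈ σ)
    (_ : ∀ i : Fin n, x i.castSucc ≠ x i.succ),
    ENNReal.ofReal (cvar f x) / (vf x : ℝ≥0∞)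

/-- BV norm: sup norm plus two-dimensional variation on `σ`. -/
noncomputable def BVnorm (h : ℂ → ℂ) (σ : Set ℂ) : ℝ≥0∞ :=
  (⨆ z ∈ σ, (‖h z‖₊ : ℝ≥0∞)) + twoVar h σ

/-- Evaluation of a polynomial in two real variables at a point of the plane. -/
noncomputable def polyEval (p : MvPolynomial (Fin 2) ℂ) (z : ℂ) : ℂ :=
  aeval ![(z.re : ℂ), (z.im : ℂ)] p

/-!
On `σ₁` the function `ĝ - χ p` equals `f = g - p`, and on `σ₂` it vanishes. Along a list `x` in
`σ = σ₁ ∪ σ₂`, the segments with both ends in `σ₁` are segments of the subsequence of `x` lying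
in `σ₁`; after dropping repeated consecutive points this subsequence is admissible for
`var(f, σ₁)` and, being a subsequence, has variation factor at most `vf x + 1 ≤ 2 vf x`. Every
other segment with a nonzero contribution jumps between `σ₁` and `σ₂`, hence crosses the
imaginary axis, so there are at most `vf x` of them, each contributing at most `‖f‖_∞`.
Therefore `var(ĝ - χ p, σ) ≤ 2 var(f, σ₁) + ‖f‖_∞` and `‖ĝ - χ p‖_BV(σ) ≤ 2 ‖f‖_BV(σ₁)`.
-/

open Finset

section VariationFactor

variable {n : ℕ} (u v : ℂ) (x : Fin (n+1) → ℂ)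

lemma vfLine_eq_card : vfLine u v x = #{i | CrossSeg u v x i} := by
  rw [vfLine, Nat.card_eq_fintype_card, Fintype.card_subtype]

lemma vfLine_le : vfLine u v x ≤ n :=
  (vfLine_eq_card u v x).trans_le ((card_filter_le _ _).trans (card_fin n).le)

lemma bddAbove_vfLine : BddAbove {m : ℕ | ∃ u v : ℂ, v ≠ 0 ∧ m = vfLine u v x} :=
  ⟨n, fun _ ⟨u, v, _, hm⟩ => hm ▸ vfLine_le u v x⟩

lemma vfLine_le_vf {v : ℂ} (hv : v ≠ 0) : vfLine u v x ≤ vf x :=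
  le_csSup (bddAbove_vfLine x) ⟨u, v, hv, rfl⟩

/-- The first segment always crosses the horizontal line through its starting point. -/
lemma one_le_vf (hn : 0 < n) : 1 ≤ vf x := by
  refine le_trans ?_ (vfLine_le_vf (x 0) x one_ne_zero)
  rw [vfLine_eq_card, Nat.one_le_iff_ne_zero, ← pos_iff_ne_zero, card_pos]
  refine ⟨⟨0, hn⟩, mem_filter.mpr ⟨mem_univ _, Or.inr (Or.inl ⟨rfl, ?_⟩)⟩⟩
  simp [sideC, crossC]

/-- A point of `x` off the line, followed later by a point on the line or on its other side,
forces a crossing segment in between: take the last segment starting on the original side. -/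
lemma exists_crossSeg_between {a b : Fin (n+1)} (hab : a < b) (ha : sideC u v (x a) ≠ 0)
    (hb : sideC u v (x a) * sideC u v (x b) ≤ 0) :
    ∃ i : Fin n, a ≤ i.castSucc ∧ i.succ ≤ b ∧ CrossSeg u v x i := by
  set s : Fin (n+1) → ℝ := fun k => sideC u v (x k)
  let t : Finset (Fin n) := {i | a ≤ i.castSucc ∧ i.castSucc < b ∧ 0 < s a * s i.castSucc}
  have ht : t.Nonempty := by
    refine ⟨a.castPred (Fin.ne_last_of_lt hab), mem_filter.mpr ⟨mem_univ _, ?_⟩⟩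
    simp only [Fin.castSucc_castPred]
    exact ⟨le_rfl, hab, mul_self_pos.mpr ha⟩
  obtain ⟨i, hit, hmax⟩ := exists_max_image t id ht
  obtain ⟨hai, hib, hpos⟩ := (mem_filter.mp hit).2
  have hsucc_le : i.succ ≤ b := Fin.castSucc_lt_iff_succ_le.mp hib
  have hnext : s a * s i.succ ≤ 0 := by
    rcases hsucc_le.eq_or_lt with h | h
    · rwa [h]
    · by_contra! hpos'
      have hne : i.succ ≠ Fin.last n := Fin.ne_last_of_lt h
      have hmem : i.succ.castPred hne ∈ t := by
        refine mem_filter.mpr ⟨mem_univ _, ?_⟩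
        simp only [Fin.castSucc_castPred]
        exact ⟨hai.trans (Fin.castSucc_lt_succ (i := i)).le, h, hpos'⟩
      have := hmax _ hmem
      rw [id, id, ← Fin.castSucc_le_castSucc_iff, Fin.castSucc_castPred] at this
      exact absurd this (not_le.mpr (Fin.castSucc_lt_succ (i := i)))
  refine ⟨i, hai, hsucc_le, ?_⟩
  by_cases h0 : s i.succ = 0
  · exact Or.inr (Or.inr ⟨right_ne_zero_of_mul hpos.ne', h0⟩)
  · have hneg : s a * s i.succ < 0 := lt_of_le_of_ne hnext (mul_ne_zero ha h0)
    left
    nlinarith [mul_neg_of_pos_of_neg hpos hneg, sq_nonneg (s a)]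

end VariationFactor

section Subsequence

variable {n m : ℕ} (u v : ℂ) (x : Fin (n+1) → ℂ)

lemma crossSeg_index_eq_zero {y : Fin (m+1) → ℂ} {k : Fin m} (hk : CrossSeg u v y k)
    (h0 : sideC u v (y k.castSucc) = 0) : (k : ℕ) = 0 := by
  rcases hk with h | h | h
  · simp [h0] at h
  · exact h.1
  · exact absurd h0 h.1

/-- Each crossing segment of a subsequence that starts off the line contains a crossing segment
of the full list; only the first segment can start on the line. -/
lemma vfLine_comp_le {φ : Fin (m+1) → Fin (n+1)} (hφ : StrictMono φ) :
    vfLine u v (x ∘ φ) ≤ vfLine u v x + 1 := by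
  set S : Finset (Fin m) := {k | CrossSeg u v (x ∘ φ) k}
  have hoff : #(S.filter fun k => sideC u v (x (φ k.castSucc)) ≠ 0) ≤ vfLine u v x := by
    rw [vfLine_eq_card]
    refine card_le_card_of_forall_subsingleton
      (fun k i => φ k.castSucc ≤ i.castSucc ∧ i.succ ≤ φ k.succ) (fun k hk => ?_) ?_
    · obtain ⟨hkS, hk0⟩ := mem_filter.mp hk
      have hcross : CrossSeg u v (x ∘ φ) k := (mem_filter.mp hkS).2
      have hb : sideC u v (x (φ k.castSucc)) * sideC u v (x (φ k.succ)) ≤ 0 := by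
        rcases hcross with h | h | h
        · exact h.le
        · exact absurd h.2 hk0
        · have h2 : sideC u v (x (φ k.succ)) = 0 := h.2
          rw [h2, mul_zero]
      obtain ⟨i, hi₁, hi₂, hi⟩ :=
        exists_crossSeg_between u v x (hφ (Fin.castSucc_lt_succ (i := k))) hk0 hb
      exact ⟨i, mem_filter.mpr ⟨mem_univ _, hi⟩, hi₁, hi₂⟩
    · intro i _ k ⟨_, hk₁, hk₂⟩ k' ⟨_, hk'₁, hk'₂⟩
      by_contra hne
      have separated : ∀ {k k' : Fin m}, k < k' → φ k.succ ≤ φ k'.castSucc := fun h =>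
        hφ.monotone (Fin.castSucc_lt_iff_succ_le.mp (Fin.castSucc_lt_castSucc_iff.mpr h))
      have hi : i.castSucc < i.succ := Fin.castSucc_lt_succ
      rcases lt_or_gt_of_ne hne with h | h
      · exact absurd ((separated h).trans hk'₁) (not_le.mpr (hi.trans_le hk₂))
      · exact absurd ((separated h).trans hk₁) (not_le.mpr (hi.trans_le hk'₂))
  have hon : #(S.filter fun k => ¬ sideC u v (x (φ k.castSucc)) ≠ 0) ≤ 1 := by
    refine card_le_one.mpr fun k hk k' hk' => ?_
    obtain ⟨hkS, hk0⟩ := mem_filter.mp hk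
    obtain ⟨hk'S, hk'0⟩ := mem_filter.mp hk'
    exact Fin.ext <| (crossSeg_index_eq_zero u v (mem_filter.mp hkS).2 (not_not.mp hk0)).trans
      (crossSeg_index_eq_zero u v (mem_filter.mp hk'S).2 (not_not.mp hk'0)).symm
  calc vfLine u v (x ∘ φ) = #S := vfLine_eq_card u v _
    _ = _ := (card_filter_add_card_filter_not _).symm
    _ ≤ vfLine u v x + 1 := add_le_add hoff hon

lemma vf_comp_le {φ : Fin (m+1) → Fin (n+1)} (hφ : StrictMono φ) : vf (x ∘ φ) ≤ vf x + 1 :=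
  csSup_le ⟨_, 0, 1, one_ne_zero, rfl⟩ fun _ ⟨u, v, hv, hm⟩ =>
    hm ▸ (vfLine_comp_le u v x hφ).trans (Nat.add_le_add_right (vfLine_le_vf u x hv) 1)

end Subsequence

section CurveVariation

variable (F : ℂ → ℂ)

lemma ofReal_cvar {n : ℕ} (x : Fin (n+1) → ℂ) :
    ENNReal.ofReal (cvar F x) = ∑ i : Fin n, ‖F (x i.succ) - F (x i.castSucc)‖ₑ := by
  rw [cvar, ENNReal.ofReal_sum_of_nonneg fun _ _ => norm_nonneg _]
  simp only [ofReal_norm]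

lemma cvar_eq_cvar_init_add {m : ℕ} (y : Fin (m+2) → ℂ) :
    cvar F y = cvar F (y ∘ Fin.castSucc) +
      ‖F (y (Fin.last (m+1))) - F (y (Fin.last m).castSucc)‖ := by
  rw [cvar, Fin.sum_univ_castSucc]
  simp only [cvar, Function.comp_apply, Fin.succ_castSucc, Fin.succ_last]

/-- Dropping repeated consecutive points does not change the curve variation. -/
lemma exists_strictMono_cvar_comp_eq {m : ℕ} (y : Fin (m+1) → ℂ) :
    ∃ (k : ℕ) (ψ : Fin (k+1) → Fin (m+1)), StrictMono ψ ∧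
      (∀ j : Fin k, y (ψ j.castSucc) ≠ y (ψ j.succ)) ∧
      y (ψ (Fin.last k)) = y (Fin.last m) ∧ cvar F (y ∘ ψ) = cvar F y := by
  induction m with
  | zero => exact ⟨0, id, strictMono_id, fun j => j.elim0, rfl, rfl⟩
  | succ m ih =>
    obtain ⟨k, ψ, hψ, hne, hlast, hcvar⟩ := ih (y ∘ Fin.castSucc)
    simp only [Function.comp_apply] at hne hlast
    by_cases hrep : y (Fin.last (m+1)) = y (Fin.last m).castSucc
    · refine ⟨k, Fin.castSucc ∘ ψ, Fin.strictMono_castSucc.comp hψ, hne, hlast.trans hrep.symm, ?_⟩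
      rw [cvar_eq_cvar_init_add F y, hrep, sub_self, norm_zero, add_zero, ← hcvar]
      rfl
    · let ψ' : Fin (k+2) → Fin (m+2) := Fin.snoc (α := fun _ => Fin (m+2))
        (Fin.castSucc ∘ ψ) (Fin.last (m+1))
      have hψ'_castSucc : ∀ j, ψ' j.castSucc = (ψ j).castSucc := fun j => Fin.snoc_castSucc ..
      have hψ'_last : ψ' (Fin.last (k+1)) = Fin.last (m+1) := Fin.snoc_last ..
      refine ⟨k+1, ψ', Fin.strictMono_iff_lt_succ.mpr fun j => ?_, fun j => ?_, ?_, ?_⟩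
      · induction j using Fin.lastCases with
        | last => simp [hψ'_castSucc, hψ'_last, Fin.castSucc_lt_last]
        | cast j =>
          rw [Fin.succ_castSucc, hψ'_castSucc, hψ'_castSucc]
          exact Fin.castSucc_lt_castSucc_iff.mpr (hψ Fin.castSucc_lt_succ)
      · induction j using Fin.lastCases with
        | last => simpa [hψ'_castSucc, hψ'_last, hlast] using Ne.symm hrep
        | cast j =>
          rw [Fin.succ_castSucc, hψ'_castSucc, hψ'_castSucc]
          exact hne j
      · rw [hψ'_last]
      · rw [cvar_eq_cvar_init_add F (y ∘ ψ'), cvar_eq_cvar_init_add F y, ← hcvar]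
        have hinit : (y ∘ ψ') ∘ Fin.castSucc = (y ∘ Fin.castSucc) ∘ ψ :=
          funext fun j => congrArg y (hψ'_castSucc j)
        simp only [hinit, Function.comp_apply, hψ'_castSucc, hψ'_last, hlast]

lemma ofReal_cvar_le_twoVar_mul_vf {m : ℕ} {σ : Set ℂ} {y : Fin (m+1) → ℂ}
    (hy : ∀ i, y i ∈ σ) (hne : ∀ j : Fin m, y j.castSucc ≠ y j.succ) :
    ENNReal.ofReal (cvar F y) ≤ twoVar F σ * vf y := by
  rcases Nat.eq_zero_or_pos m with rfl | hm
  · simp [cvar]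
  · have hvf : (vf y : ℝ≥0∞) ≠ 0 :=
      Nat.cast_ne_zero.mpr (Nat.one_le_iff_ne_zero.mp (one_le_vf y hm))
    rw [← ENNReal.div_le_iff hvf (ENNReal.natCast_ne_top _)]
    exact le_iSup_of_le m (le_iSup_of_le y (le_iSup_of_le hy (le_iSup_of_le hne le_rfl)))

lemma exists_strictMono_ofReal_cvar_le {m : ℕ} {σ : Set ℂ} {y : Fin (m+1) → ℂ}
    (hy : ∀ i, y i ∈ σ) :
    ∃ (k : ℕ) (ψ : Fin (k+1) → Fin (m+1)), StrictMono ψ ∧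
      ENNReal.ofReal (cvar F y) ≤ twoVar F σ * vf (y ∘ ψ) := by
  obtain ⟨k, ψ, hψ, hne, -, hcvar⟩ := exists_strictMono_cvar_comp_eq F y
  exact ⟨k, ψ, hψ, hcvar ▸ ofReal_cvar_le_twoVar_mul_vf F (fun j => hy (ψ j)) hne⟩

end CurveVariation

section RestrictedVariation

variable (F : ℂ → ℂ) {n : ℕ} (x : Fin (n+1) → ℂ)

lemma exists_succ_eq_of_mem_range {m : ℕ} {φ : Fin (m+1) → Fin (n+1)} (hφ : StrictMono φ)
    {i : Fin n} (h₀ : i.castSucc ∈ Set.range φ) (h₁ : i.succ ∈ Set.range φ) :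
    ∃ j : Fin m, φ j.castSucc = i.castSucc ∧ φ j.succ = i.succ := by
  obtain ⟨a, ha⟩ := h₀
  obtain ⟨b, hb⟩ := h₁
  have hab : a < b := hφ.lt_iff_lt.mp (ha ▸ hb ▸ Fin.castSucc_lt_succ)
  set j := a.castPred (Fin.ne_last_of_lt hab)
  have hja : j.castSucc = a := Fin.castSucc_castPred a _
  have hjb : j.succ = b := by
    refine le_antisymm (Fin.castSucc_lt_iff_succ_le.mp (hja ▸ hab)) (not_lt.mp fun hlt => ?_)
    have hlo : i.castSucc < φ j.succ := ha ▸ hja ▸ hφ Fin.castSucc_lt_succ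
    exact (Fin.castSucc_lt_iff_succ_le.mp hlo).not_gt (hb ▸ hφ hlt)
  exact ⟨j, hja ▸ ha, hjb ▸ hb⟩

lemma sum_enorm_le_ofReal_cvar_comp {m : ℕ} {φ : Fin (m+1) → Fin (n+1)} (hφ : StrictMono φ)
    {B : Finset (Fin n)} (hB : ∀ i ∈ B, i.castSucc ∈ Set.range φ ∧ i.succ ∈ Set.range φ) :
    ∑ i ∈ B, ‖F (x i.succ) - F (x i.castSucc)‖ₑ ≤ ENNReal.ofReal (cvar F (x ∘ φ)) := by
  have key (i : B) := exists_succ_eq_of_mem_range hφ (hB i i.2).1 (hB i i.2).2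
  choose e he using key
  have he_inj : Function.Injective e := fun i i' h =>
    Subtype.ext (Fin.succ_injective _ ((he i).2.symm.trans (h ▸ (he i').2)))
  calc ∑ i ∈ B, ‖F (x i.succ) - F (x i.castSucc)‖ₑ
      = ∑' i : B, ‖F (x (φ (e i).succ)) - F (x (φ (e i).castSucc))‖ₑ := by
        rw [← Finset.tsum_subtype]
        exact tsum_congr fun i => by rw [(he i).1, (he i).2]
    _ ≤ ∑' j : Fin m, ‖F (x (φ j.succ)) - F (x (φ j.castSucc))‖ₑ :=
        ENNReal.tsum_comp_le_tsum_of_injective he_inj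
          (fun j => ‖F (x (φ j.succ)) - F (x (φ j.castSucc))‖ₑ)
    _ = ENNReal.ofReal (cvar F (x ∘ φ)) := by rw [tsum_fintype, ofReal_cvar]; rfl

lemma sum_enorm_of_mem_le_twoVar_mul (σ : Set ℂ) :
    ∑ i : Fin n with x i.castSucc ∈ σ ∧ x i.succ ∈ σ, ‖F (x i.succ) - F (x i.castSucc)‖ₑ ≤
      twoVar F σ * (vf x + 1) := by
  set s : Finset (Fin (n+1)) := {i | x i ∈ σ}
  have hs : ∀ i, i ∈ s ↔ x i ∈ σ := fun i => by simp [s]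
  rcases Nat.eq_zero_or_pos #s with hs0 | hspos
  · have hempty : ∀ i, x i ∉ σ := fun i h => by simpa [card_eq_zero.mp hs0] using (hs i).mpr h
    simp [hempty]
  obtain ⟨m, hm⟩ : ∃ m, #s = m + 1 := ⟨#s - 1, by omega⟩
  set φ := s.orderEmbOfFin hm
  have hrange : Set.range φ = s := range_orderEmbOfFin s hm
  have hmem : ∀ i, x i ∈ σ → i ∈ Set.range φ := fun i h => hrange ▸ (hs i).mpr h
  obtain ⟨k, ψ, hψ, hcvar⟩ := exists_strictMono_ofReal_cvar_le F
    (y := x ∘ φ) fun j => (hs _).mp (orderEmbOfFin_mem s hm j)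
  calc ∑ i : Fin n with x i.castSucc ∈ σ ∧ x i.succ ∈ σ, ‖F (x i.succ) - F (x i.castSucc)‖ₑ
      ≤ ENNReal.ofReal (cvar F (x ∘ φ)) := sum_enorm_le_ofReal_cvar_comp F x φ.strictMono
        fun i hi => ⟨hmem _ (mem_filter.mp hi).2.1, hmem _ (mem_filter.mp hi).2.2⟩
    _ ≤ twoVar F σ * vf (x ∘ (φ ∘ ψ)) := hcvar
    _ ≤ twoVar F σ * (vf x + 1) := by
        gcongr
        exact_mod_cast vf_comp_le x (φ.strictMono.comp hψ)

end RestrictedVariation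

lemma sideC_zero_I (z : ℂ) : sideC 0 Complex.I z = -z.re := by
  simp [sideC, crossC]

section Separated

variable {σ₁ σ₂ : Set ℂ} {f h : ℂ → ℂ} {M : ℝ≥0∞}

lemma enorm_sub_le_of_separated (hre₁ : ∀ z ∈ σ₁, z.re < 0) (hre₂ : ∀ z ∈ σ₂, 0 < z.re)
    (hh₁ : ∀ z ∈ σ₁, h z = f z) (hh₂ : ∀ z ∈ σ₂, h z = 0) (hM : ∀ z ∈ σ₁, ‖f z‖ₑ ≤ M)
    {z w : ℂ} (hz : z ∈ σ₁ ∪ σ₂) (hw : w ∈ σ₁ ∪ σ₂) :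
    ‖h w - h z‖ₑ ≤
      (if z ∈ σ₁ ∧ w ∈ σ₁ then ‖f w - f z‖ₑ else 0) + (if z.re * w.re < 0 then M else 0) := by
  rcases hz with hz | hz <;> rcases hw with hw | hw
  · rw [if_pos ⟨hz, hw⟩, hh₁ z hz, hh₁ w hw]
    exact le_self_add
  · rw [if_pos (mul_neg_of_neg_of_pos (hre₁ z hz) (hre₂ w hw)), hh₁ z hz, hh₂ w hw, zero_sub,
      enorm_neg]
    exact le_add_left (hM z hz)
  · rw [if_pos (mul_neg_of_pos_of_neg (hre₂ z hz) (hre₁ w hw)), hh₂ z hz, hh₁ w hw, sub_zero]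
    exact le_add_left (hM w hw)
  · simp [hh₂ z hz, hh₂ w hw]

lemma ofReal_cvar_le_of_separated (hre₁ : ∀ z ∈ σ₁, z.re < 0) (hre₂ : ∀ z ∈ σ₂, 0 < z.re)
    (hh₁ : ∀ z ∈ σ₁, h z = f z) (hh₂ : ∀ z ∈ σ₂, h z = 0) (hM : ∀ z ∈ σ₁, ‖f z‖ₑ ≤ M)
    {n : ℕ} (hn : 0 < n) {x : Fin (n+1) → ℂ} (hx : ∀ i, x i ∈ σ₁ ∪ σ₂) :
    ENNReal.ofReal (cvar h x) ≤ vf x * (2 * twoVar f σ₁ + M) := by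
  have hjumps : #{i : Fin n | (x i.castSucc).re * (x i.succ).re < 0} ≤ vf x := by
    refine le_trans (card_le_card fun i hi => ?_)
      ((vfLine_eq_card 0 Complex.I x).symm.trans_le (vfLine_le_vf 0 x Complex.I_ne_zero))
    simp only [mem_filter, mem_univ, true_and] at hi ⊢
    exact Or.inl (by simpa [sideC_zero_I] using hi)
  have hvf : (1 : ℝ≥0∞) ≤ vf x := by exact_mod_cast one_le_vf x hn
  calc ENNReal.ofReal (cvar h x)
      = ∑ i : Fin n, ‖h (x i.succ) - h (x i.castSucc)‖ₑ := ofReal_cvar h x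
    _ ≤ ∑ i : Fin n, ((if x i.castSucc ∈ σ₁ ∧ x i.succ ∈ σ₁ then
          ‖f (x i.succ) - f (x i.castSucc)‖ₑ else 0) +
          (if (x i.castSucc).re * (x i.succ).re < 0 then M else 0)) :=
        sum_le_sum fun i _ => enorm_sub_le_of_separated hre₁ hre₂ hh₁ hh₂ hM (hx _) (hx _)
    _ = ∑ i : Fin n with x i.castSucc ∈ σ₁ ∧ x i.succ ∈ σ₁, ‖f (x i.succ) - f (x i.castSucc)‖ₑ +
          #{i : Fin n | (x i.castSucc).re * (x i.succ).re < 0} * M := by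
        rw [sum_add_distrib, ← sum_filter, ← sum_filter, sum_const, nsmul_eq_mul]
    _ ≤ twoVar f σ₁ * (vf x + 1) + vf x * M :=
        add_le_add (sum_enorm_of_mem_le_twoVar_mul f x σ₁) (by gcongr)
    _ ≤ twoVar f σ₁ * (vf x + vf x) + vf x * M := by gcongr
    _ = vf x * (2 * twoVar f σ₁ + M) := by ring

lemma twoVar_le_of_separated (hre₁ : ∀ z ∈ σ₁, z.re < 0) (hre₂ : ∀ z ∈ σ₂, 0 < z.re)
    (hh₁ : ∀ z ∈ σ₁, h z = f z) (hh₂ : ∀ z ∈ σ₂, h z = 0) (hM : ∀ z ∈ σ₁, ‖f z‖ₑ ≤ M) :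
    twoVar h (σ₁ ∪ σ₂) ≤ 2 * twoVar f σ₁ + M := by
  refine iSup_le fun n => iSup_le fun x => iSup_le fun hx => iSup_le fun _ => ?_
  rcases Nat.eq_zero_or_pos n with rfl | hn
  · simp [cvar]
  · exact ENNReal.div_le_of_le_mul' (ofReal_cvar_le_of_separated hre₁ hre₂ hh₁ hh₂ hM hn hx)

lemma BVnorm_le_two_mul_of_separated (hre₁ : ∀ z ∈ σ₁, z.re < 0) (hre₂ : ∀ z ∈ σ₂, 0 < z.re)
    (hh₁ : ∀ z ∈ σ₁, h z = f z) (hh₂ : ∀ z ∈ σ₂, h z = 0) :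
    BVnorm h (σ₁ ∪ σ₂) ≤ 2 * BVnorm f σ₁ := by
  set S := ⨆ z ∈ σ₁, (‖f z‖₊ : ℝ≥0∞)
  have hM : ∀ z ∈ σ₁, ‖f z‖ₑ ≤ S := fun z hz =>
    le_iSup₂ (f := fun z (_ : z ∈ σ₁) => (‖f z‖₊ : ℝ≥0∞)) z hz
  have hsup : (⨆ z ∈ σ₁ ∪ σ₂, (‖h z‖₊ : ℝ≥0∞)) ≤ S := iSup₂_le fun z hz =>
    hz.elim (fun hz => hh₁ z hz ▸ hM z hz) (fun hz => by simp [hh₂ z hz])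
  calc BVnorm h (σ₁ ∪ σ₂) ≤ S + (2 * twoVar f σ₁ + S) :=
        add_le_add hsup (twoVar_le_of_separated hre₁ hre₂ hh₁ hh₂ hM)
    _ = 2 * BVnorm f σ₁ := by rw [BVnorm]; ring

end Separated

theorem stmt19_general (σ₁ σ₂ : Set ℂ)
    (hre1 : ∀ z ∈ σ₁, z.re < 0) (hre2 : ∀ z ∈ σ₂, 0 < z.re)
    (g : ℂ → ℂ)
    (hg : ∀ ε > (0:ℝ), ∃ p : MvPolynomial (Fin 2) ℂ,
      BVnorm (fun z => g z - polyEval p z) σ₁ < ENNReal.ofReal ε)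
    (ghat : ℂ → ℂ) (hghat : ∀ z, ghat z = if z ∈ σ₁ then g z else 0) :
    ∀ ε > (0:ℝ), ∃ p : MvPolynomial (Fin 2) ℂ,
      BVnorm (fun z => ghat z
          - (if z.re ≤ 0 then (1:ℂ) else 0) * polyEval p z) (σ₁ ∪ σ₂)
        < ENNReal.ofReal ε := by
  intro ε hε
  obtain ⟨p, hp⟩ := hg (ε / 2) (half_pos hε)
  have hh₁ : ∀ z ∈ σ₁, ghat z - (if z.re ≤ 0 then (1:ℂ) else 0) * polyEval p z =
      g z - polyEval p z := fun z hz => by simp [hghat, hz, (hre1 z hz).le]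
  have hh₂ : ∀ z ∈ σ₂, ghat z - (if z.re ≤ 0 then (1:ℂ) else 0) * polyEval p z = 0 :=
    fun z hz => by
      have hz₁ : z ∉ σ₁ := fun hz' => (hre1 z hz').not_gt (hre2 z hz)
      simp [hghat, hz₁, hre2 z hz]
  refine ⟨p, (BVnorm_le_two_mul_of_separated hre1 hre2 hh₁ hh₂).trans_lt ?_⟩
  calc 2 * BVnorm (fun z => g z - polyEval p z) σ₁ < 2 * ENNReal.ofReal (ε / 2) :=
        (ENNReal.mul_lt_mul_iff_right (by norm_num) (by norm_num)).mpr hp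
    _ = ENNReal.ofReal ε := by
        rw [← ENNReal.ofReal_ofNat 2, ← ENNReal.ofReal_mul (by norm_num)]
        ring_nf

theorem stmt19 (σ₁ σ₂ : Set ℂ) (h1 : IsCompact σ₁) (h2 : IsCompact σ₂)
    (hn1 : σ₁.Nonempty) (hn2 : σ₂.Nonempty)
    (hre1 : ∀ z ∈ σ₁, z.re < 0) (hre2 : ∀ z ∈ σ₂, 0 < z.re)
    (g : ℂ → ℂ)
    (hg : ∀ ε > (0:ℝ), ∃ p : MvPolynomial (Fin 2) ℂ,
      BVnorm (fun z => g z - polyEval p z) σ₁ < ENNReal.ofReal ε)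
    (ghat : ℂ → ℂ) (hghat : ∀ z, ghat z = if z ∈ σ₁ then g z else 0) :
    ∀ ε > (0:ℝ), ∃ p : MvPolynomial (Fin 2) ℂ,
      BVnorm (fun z => ghat z
          - (if z.re ≤ 0 then (1:ℂ) else 0) * polyEval p z) (σ₁ ∪ σ₂)
        < ENNReal.ofReal ε :=
  stmt19_general σ₁ σ₂ hre1 hre2 g hg ghat hghat
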